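/- arXiv:1301.2828 — 5 statements merged into one kernel-verified Lean document; each statement's English description precedes it below -/
import Mathlib

section
/- Let h : ℝ → ℂ be continuously differentiable with h(t)/t → 0 as |t| → ∞, and let x ∈ ℝ be such that the principal-value integral defining 𝔊(h)(x) exists. Then x·𝔊(h)(x) = (1/2)·h(0)·x·sign(x) + i·𝔊(Λh)(x), where also the principal-value integral defining 𝔊(Λh)(x) exists. -/
/-!
Put `F(t) = e^{-itx} (h(t) - h(0)) / t`. Away from `0` the integrand of `𝔊(Λh)(x)` is
`-F'(t) - ix e^{-itx} h(t)/t + ix h(0) e^{-itx}/t`, so on `[-A, -ε] ∪ [ε, A]` its integral is a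
boundary term of `F`, plus `-ix` times the truncated integral of `𝔊(h)(x)`, plus `ix h(0)` times
`-2i ∫_ε^A sin(tx)/t dt`. The boundary term tends to `0`, since `F → h'(0)` on both sides of `0`
and `F → 0` at infinity, and the last integral is Dirichlet's, with limit `(π/2) sign x`; it is
evaluated by writing `1/t = ∫_0^∞ e^{-tu} du`, exchanging the integrals and letting `A → ∞` under
the `u`-integral by dominated convergence.
-/

open MeasureTheory Filter Set
open scoped Real Topology

/-- The integrand `e^{-itx} f(t) / t` of the integral defining `𝔊(f)(x)`. -/
noncomputable def pvI (f : ℝ → ℂ) (x t : ℝ) : ℂ :=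
  Complex.exp (-(Complex.I) * t * x) * f t / t

/-- `HasG f x L` means that the principal-value integral defining
`𝔊(f)(x) = (i/(2π)) p.v.∫_{-∞}^∞ e^{-itx} f(t) dt/t` exists and equals `L`, where
`p.v.∫ = lim_{ε↓0, A↑∞} (∫_{-A}^{-ε} + ∫_ε^A)`. -/
def HasG (f : ℝ → ℂ) (x : ℝ) (L : ℂ) : Prop :=
  Tendsto (fun q : ℝ × ℝ =>
      (Complex.I / (2 * (Real.pi : ℂ))) *
        ((∫ t in (-q.2)..(-q.1), pvI f x t) + ∫ t in q.1..q.2, pvI f x t))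
    ((𝓝[>] (0 : ℝ)) ×ˢ atTop) (𝓝 L)

/-- The operator `Λ`: `(Λh)(t) = -(h(0) - [h(t) + h'(t)(-t)])/t` for `t ≠ 0`, `(Λh)(0) = 0`. -/
noncomputable def Lam (h : ℝ → ℂ) (t : ℝ) : ℂ :=
  if t = 0 then 0 else -((h 0 - (h t + deriv h t * (-(t : ℂ)))) / (t : ℂ))

section Dirichlet

open Real

lemma abs_sin_div_self_le_one (t : ℝ) : |sin t / t| ≤ 1 := by
  rcases eq_or_ne t 0 with rfl | ht
  · simp
  · rw [abs_div]
    exact div_le_one_of_le₀ abs_sin_le_abs (abs_nonneg t)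

lemma intervalIntegrable_sin_div_self (a b : ℝ) :
    IntervalIntegrable (fun t => sin t / t) volume a b := by
  refine (intervalIntegrable_const (c := (1 : ℝ))).mono_fun'
    (measurable_sin.div measurable_id).aestronglyMeasurable ?_
  exact ae_of_all _ fun t => abs_sin_div_self_le_one t

lemma integral_exp_neg_mul_Ioi {t : ℝ} (ht : 0 < t) :
    ∫ u in Ioi (0 : ℝ), exp (-t * u) = t⁻¹ := by
  rw [integral_exp_mul_Ioi (neg_neg_iff_pos.2 ht), mul_zero, exp_zero, neg_div, div_neg,
    neg_neg, one_div]

lemma integral_sin_mul_exp_neg_mul (A u : ℝ) :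
    ∫ t in (0 : ℝ)..A, sin t * exp (-t * u)
      = (1 - exp (-A * u) * (cos A + u * sin A)) / (1 + u ^ 2) := by
  have hpos : (1 : ℝ) + u ^ 2 ≠ 0 := by positivity
  have hderiv : ∀ t, HasDerivAt (fun t => -(exp (-t * u) * (cos t + u * sin t)) / (1 + u ^ 2))
      (sin t * exp (-t * u)) t := by
    intro t
    refine (((((hasDerivAt_id t).neg.mul_const u).exp).mul
      ((hasDerivAt_cos t).add ((hasDerivAt_sin t).const_mul u))).neg.div_const
        (1 + u ^ 2)).congr_deriv ?_
    simp only [Pi.neg_apply, id, Pi.add_apply]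
    field_simp
    ring
  rw [intervalIntegral.integral_eq_sub_of_hasDerivAt (fun t _ => hderiv t)
    ((by fun_prop : Continuous fun t => sin t * exp (-t * u)).intervalIntegrable _ _)]
  simp only [neg_zero, zero_mul, exp_zero, cos_zero, sin_zero, mul_zero, add_zero, one_mul]
  ring

lemma integrable_sin_mul_exp_neg_mul_prod {A : ℝ} (hA : 0 ≤ A) :
    Integrable (Function.uncurry fun t u => sin t * exp (-t * u))
      ((volume.restrict (uIoc 0 A)).prod (volume.restrict (Ioi (0 : ℝ)))) := by
  have hmeas : AEStronglyMeasurable (Function.uncurry fun t u => sin t * exp (-t * u))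
      ((volume.restrict (uIoc 0 A)).prod (volume.restrict (Ioi (0 : ℝ)))) :=
    (by fun_prop : Continuous (Function.uncurry fun t u : ℝ => sin t * exp (-t * u)))
      |>.aestronglyMeasurable
  rw [uIoc_of_le hA]
  refine (integrable_prod_iff (uIoc_of_le hA ▸ hmeas)).2 ⟨?_, ?_⟩
  · refine (ae_restrict_iff' measurableSet_Ioc).2 (ae_of_all _ fun t ht => ?_)
    exact (exp_neg_integrableOn_Ioi 0 ht.1).const_mul (sin t)
  · refine (integrableOn_const measure_Ioc_lt_top.ne (C := (1 : ℝ))).mono'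
      (uIoc_of_le hA ▸ hmeas).norm.integral_prod_right' ?_
    refine (ae_restrict_iff' measurableSet_Ioc).2 (ae_of_all _ fun t ht => ?_)
    have hnorm : ∫ u in Ioi (0 : ℝ), |sin t * exp (-t * u)| = |sin t / t| := by
      simp_rw [abs_mul, abs_exp]
      rw [integral_const_mul, integral_exp_neg_mul_Ioi ht.1, abs_div, abs_of_pos ht.1,
        div_eq_mul_inv]
    simpa only [Function.uncurry_apply_pair, norm_eq_abs, abs_abs, hnorm] using
      abs_sin_div_self_le_one t

lemma integral_sin_div_self_eq_integral_Ioi {A : ℝ} (hA : 0 ≤ A) :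
    ∫ t in (0 : ℝ)..A, sin t / t
      = ∫ u in Ioi (0 : ℝ), (1 - exp (-A * u) * (cos A + u * sin A)) / (1 + u ^ 2) := by
  have hinner : ∀ t ∈ Ioc 0 A, ∫ u in Ioi (0 : ℝ), sin t * exp (-t * u) = sin t / t :=
    fun t ht => by rw [integral_const_mul, integral_exp_neg_mul_Ioi ht.1, div_eq_mul_inv]
  calc ∫ t in (0 : ℝ)..A, sin t / t
      = ∫ t in (0 : ℝ)..A, ∫ u in Ioi (0 : ℝ), sin t * exp (-t * u) :=
        intervalIntegral.integral_congr_ae (ae_of_all _ fun t ht =>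
          (hinner t (uIoc_of_le hA ▸ ht)).symm)
    _ = ∫ u in Ioi (0 : ℝ), ∫ t in (0 : ℝ)..A, sin t * exp (-t * u) :=
        intervalIntegral_integral_swap (integrable_sin_mul_exp_neg_mul_prod hA)
    _ = _ := by simp_rw [integral_sin_mul_exp_neg_mul]

lemma abs_exp_neg_mul_mul_cos_add_mul_sin_le (A : ℝ) {u : ℝ} (hu : 0 ≤ u) :
    |exp (-A * u) * (cos A + u * sin A)| ≤ exp (-A * u) * (1 + u) := by
  rw [abs_mul, abs_exp]
  refine mul_le_mul_of_nonneg_left ?_ (exp_pos _).le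
  calc |cos A + u * sin A| ≤ |cos A| + u * |sin A| := by
        simpa [abs_mul, abs_of_nonneg hu] using abs_add_le (cos A) (u * sin A)
    _ ≤ 1 + u := by
        gcongr
        · exact abs_cos_le_one A
        · exact mul_le_of_le_one_right hu (abs_sin_le_one A)

lemma abs_exp_neg_mul_mul_cos_add_mul_sin_le_one {A u : ℝ} (hA : 1 ≤ A) (hu : 0 ≤ u) :
    |exp (-A * u) * (cos A + u * sin A)| ≤ 1 :=
  calc |exp (-A * u) * (cos A + u * sin A)| ≤ exp (-A * u) * (1 + u) :=
        abs_exp_neg_mul_mul_cos_add_mul_sin_le A hu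
    _ ≤ exp (-u) * exp u := by
        gcongr
        · nlinarith
        · linarith [add_one_le_exp u]
    _ = 1 := by rw [← exp_add, neg_add_cancel, exp_zero]

theorem tendsto_integral_sin_div_self_atTop :
    Tendsto (fun A => ∫ t in (0 : ℝ)..A, sin t / t) atTop (𝓝 (π / 2)) := by
  have hlim := tendsto_integral_filter_of_dominated_convergence
    (μ := volume.restrict (Ioi (0 : ℝ))) (l := atTop)
    (F := fun A u => (1 - exp (-A * u) * (cos A + u * sin A)) / (1 + u ^ 2))
    (f := fun u => (1 + u ^ 2)⁻¹) (fun u => 2 * (1 + u ^ 2)⁻¹) ?_ ?_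
    (integrable_inv_one_add_sq.integrableOn.const_mul 2) ?_
  · rw [integral_Ioi_inv_one_add_sq, arctan_zero, sub_zero] at hlim
    refine hlim.congr' ?_
    filter_upwards [eventually_ge_atTop 0] with A hA
    exact (integral_sin_div_self_eq_integral_Ioi hA).symm
  · exact Eventually.of_forall fun A => (Continuous.div (by fun_prop) (by fun_prop)
      fun u => by positivity).aestronglyMeasurable
  · filter_upwards [eventually_ge_atTop 1] with A hA
    refine (ae_restrict_iff' measurableSet_Ioi).2 (ae_of_all _ fun u (hu : 0 < u) => ?_)
    have hrem := abs_exp_neg_mul_mul_cos_add_mul_sin_le_one hA hu.le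
    rw [norm_eq_abs, abs_div, abs_of_pos (by positivity : (0 : ℝ) < 1 + u ^ 2), div_eq_mul_inv]
    gcongr
    obtain ⟨hlo, hhi⟩ := abs_le.1 hrem
    exact abs_le.2 ⟨by linarith, by linarith⟩
  · refine (ae_restrict_iff' measurableSet_Ioi).2 (ae_of_all _ fun u (hu : 0 < u) => ?_)
    have hexp : Tendsto (fun A => exp (-A * u) * (1 + u)) atTop (𝓝 0) := by
      simpa using ((tendsto_exp_atBot.comp
        (tendsto_neg_atTop_atBot.atBot_mul_const hu)).mul_const (1 + u))
    have hrem : Tendsto (fun A => exp (-A * u) * (cos A + u * sin A)) atTop (𝓝 0) :=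
      squeeze_zero_norm (fun A => abs_exp_neg_mul_mul_cos_add_mul_sin_le A hu.le) hexp
    simpa [one_div] using (hrem.const_sub 1).div_const (1 + u ^ 2)

theorem tendsto_integral_sin_div_self :
    Tendsto (fun q : ℝ × ℝ => ∫ t in q.1..q.2, sin t / t) (𝓝[>] 0 ×ˢ atTop) (𝓝 (π / 2)) := by
  have hcont := intervalIntegral.continuous_primitive intervalIntegrable_sin_div_self 0
  have hzero : Tendsto (fun a => ∫ t in (0 : ℝ)..a, sin t / t) (𝓝[>] 0) (𝓝 0) := by
    simpa using (hcont.tendsto 0).mono_left nhdsWithin_le_nhds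
  simpa [intervalIntegral.integral_interval_sub_left (intervalIntegrable_sin_div_self _ _)
      (intervalIntegrable_sin_div_self _ _)] using
    (tendsto_integral_sin_div_self_atTop.comp tendsto_snd).sub (hzero.comp tendsto_fst)

lemma integral_sin_mul_div_self_eq {x : ℝ} (hx : x ≠ 0) (a b : ℝ) :
    ∫ t in a..b, sin (t * x) / t = ∫ u in a * x..b * x, sin u / u := by
  rw [← intervalIntegral.smul_integral_comp_mul_right, smul_eq_mul,
    ← intervalIntegral.integral_const_mul]
  refine intervalIntegral.integral_congr fun t _ => ?_
  rcases eq_or_ne t 0 with rfl | ht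
  · simp
  · field_simp

lemma tendsto_integral_sin_mul_div_self_of_pos {x : ℝ} (hx : 0 < x) :
    Tendsto (fun q : ℝ × ℝ => ∫ t in q.1..q.2, sin (t * x) / t) (𝓝[>] 0 ×ˢ atTop)
      (𝓝 (π / 2)) := by
  have hscale : Tendsto (fun a : ℝ => a * x) (𝓝[>] 0) (𝓝[>] 0) :=
    ((continuous_mul_const x).tendsto' 0 0 (zero_mul x)).inf
      (tendsto_principal_principal.2 fun a (ha : 0 < a) => mul_pos ha hx)
  simp_rw [integral_sin_mul_div_self_eq hx.ne']
  exact tendsto_integral_sin_div_self.comp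
    ((hscale.comp tendsto_fst).prodMk (tendsto_snd.atTop_mul_const hx))

theorem tendsto_integral_sin_mul_div_self (x : ℝ) :
    Tendsto (fun q : ℝ × ℝ => ∫ t in q.1..q.2, sin (t * x) / t) (𝓝[>] 0 ×ˢ atTop)
      (𝓝 (π / 2 * Real.sign x)) := by
  rcases lt_trichotomy x 0 with hx | rfl | hx
  · have hodd : ∀ q : ℝ × ℝ, ∫ t in q.1..q.2, sin (t * x) / t
        = -∫ t in q.1..q.2, sin (t * -x) / t := fun q => by
      rw [← intervalIntegral.integral_neg]
      simp only [mul_neg, sin_neg, neg_div, neg_neg]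
    simpa [hodd, Real.sign_of_neg hx] using
      (tendsto_integral_sin_mul_div_self_of_pos (neg_pos.2 hx)).neg
  · simp
  · simpa [Real.sign_of_pos hx] using tendsto_integral_sin_mul_div_self_of_pos hx

end Dirichlet

lemma tendsto_boundary_terms {E : Type*} [TopologicalSpace E] [AddCommGroup E]
    [IsTopologicalAddGroup E] {F : ℝ → E} {c : E}
    (hinf : Tendsto F (cocompact ℝ) (𝓝 0)) (hzero : Tendsto F (𝓝[≠] 0) (𝓝 c)) :
    Tendsto (fun q : ℝ × ℝ => F (-q.2) - F (-q.1) + (F q.1 - F q.2)) (𝓝[>] 0 ×ˢ atTop)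
      (𝓝 0) := by
  have hbot : Tendsto (fun q : ℝ × ℝ => F (-q.2)) (𝓝[>] 0 ×ˢ atTop) (𝓝 0) :=
    hinf.comp ((tendsto_neg_atTop_atBot.comp tendsto_snd).mono_right atBot_le_cocompact)
  have htop : Tendsto (fun q : ℝ × ℝ => F q.2) (𝓝[>] 0 ×ˢ atTop) (𝓝 0) :=
    hinf.comp (tendsto_snd.mono_right atTop_le_cocompact)
  have hneg : Tendsto (fun q : ℝ × ℝ => F (-q.1)) (𝓝[>] 0 ×ˢ atTop) (𝓝 c) := by
    refine hzero.comp (((tendsto_neg_nhdsGT_neg (a := (0 : ℝ))).mono_right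
      (nhdsWithin_mono _ fun t (ht : t < 0) => ht.ne)).comp ?_)
    simpa using tendsto_fst
  have hpos : Tendsto (fun q : ℝ × ℝ => F q.1) (𝓝[>] 0 ×ˢ atTop) (𝓝 c) :=
    hzero.comp (tendsto_fst.mono_right (nhdsWithin_mono _ fun t (ht : 0 < t) => ht.ne'))
  simpa using (hbot.sub hneg).add (hpos.sub htop)

lemma tendsto_ofReal_inv_cocompact : Tendsto (fun t : ℝ => (t : ℂ)⁻¹) (cocompact ℝ) (𝓝 0) := by
  refine squeeze_zero_norm (fun t => le_of_eq ?_)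
    (tendsto_inv_atTop_zero.comp (tendsto_norm_cocompact_atTop (E := ℝ)))
  simp

lemma tendsto_sub_const_div_cocompact {f : ℝ → ℂ} (c : ℂ)
    (hf : Tendsto (fun t : ℝ => f t / t) (cocompact ℝ) (𝓝 0)) :
    Tendsto (fun t : ℝ => (f t - c) / t) (cocompact ℝ) (𝓝 0) := by
  have hlim := hf.sub (tendsto_ofReal_inv_cocompact.const_mul c)
  rw [mul_zero, sub_zero] at hlim
  exact hlim.congr fun t => by rw [sub_div, div_eq_mul_inv c]

section

open Complex

noncomputable def pvPartial (f : ℝ → ℂ) (q : ℝ × ℝ) : ℂ :=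
  (∫ t in (-q.2)..(-q.1), f t) + ∫ t in q.1..q.2, f t

lemma hasG_iff {f : ℝ → ℂ} {x : ℝ} {L : ℂ} :
    HasG f x L ↔ Tendsto (fun q => I / (2 * π) * pvPartial (pvI f x) q)
      (𝓝[>] 0 ×ˢ atTop) (𝓝 L) :=
  Iff.rfl

variable (h : ℝ → ℂ) (x : ℝ)

lemma norm_pvI (f : ℝ → ℂ) (t : ℝ) : ‖pvI f x t‖ = ‖f t / t‖ := by
  rw [pvI, mul_div_assoc, norm_mul, norm_exp]
  simp

lemma continuousAt_pvI {f : ℝ → ℂ} {t : ℝ} (hf : ContinuousAt f t) (ht : t ≠ 0) :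
    ContinuousAt (pvI f x) t :=
  ((by fun_prop : ContinuousAt (fun s : ℝ => exp (-I * s * x)) t).mul hf).div
    (by fun_prop) (ofReal_ne_zero.2 ht)

lemma intervalIntegrable_pvI {f : ℝ → ℂ} {a b : ℝ} (hf : ∀ t ∈ uIcc a b, ContinuousAt f t)
    (h0 : (0 : ℝ) ∉ uIcc a b) : IntervalIntegrable (pvI f x) volume a b :=
  ContinuousOn.intervalIntegrable fun t ht =>
    (continuousAt_pvI x (hf t ht) (ne_of_mem_of_not_mem ht h0)).continuousWithinAt

lemma tendsto_pvI_cocompact {f : ℝ → ℂ}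
    (hf : Tendsto (fun t : ℝ => f t / t) (cocompact ℝ) (𝓝 0)) :
    Tendsto (pvI f x) (cocompact ℝ) (𝓝 0) :=
  squeeze_zero_norm (fun t => (norm_pvI x f t).le) (by simpa using hf.norm)

lemma tendsto_pvI_nhdsNE {f : ℝ → ℂ} {f' : ℂ} (hf : HasDerivAt f f' 0) (hf0 : f 0 = 0) :
    Tendsto (pvI f x) (𝓝[≠] 0) (𝓝 f') := by
  have hexp : Tendsto (fun t : ℝ => exp (-I * t * x)) (𝓝[≠] 0) (𝓝 1) := by
    simpa using ((by fun_prop : Continuous fun t : ℝ => exp (-I * t * x)).tendsto 0).mono_left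
      nhdsWithin_le_nhds
  have hlim := hexp.mul (hasDerivAt_iff_tendsto_slope.1 hf)
  rw [one_mul] at hlim
  refine hlim.congr fun t => ?_
  rw [slope_def_module, hf0, sub_zero, sub_zero, real_smul, ofReal_inv, pvI]
  ring

lemma continuousAt_Lam (hC1 : ContDiff ℝ 1 h) {t : ℝ} (ht : t ≠ 0) : ContinuousAt (Lam h) t := by
  have hcont : ContinuousAt (fun s : ℝ => -((h 0 - (h s + deriv h s * (-(s : ℂ)))) / s)) t :=
    ((continuousAt_const.sub ((hC1.continuous.continuousAt).add
      ((hC1.continuous_deriv le_rfl).continuousAt.mul (by fun_prop)))).div (by fun_prop)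
      (ofReal_ne_zero.2 ht)).neg
  refine hcont.congr ?_
  filter_upwards [eventually_ne_nhds ht] with s hs
  simp [Lam, hs]

lemma hasDerivAt_pvI_sub_const (hC1 : ContDiff ℝ 1 h) {t : ℝ} (ht : t ≠ 0) :
    HasDerivAt (pvI (fun s => h s - h 0) x)
      (-pvI (Lam h) x t - I * x * pvI h x t + I * x * h 0 * pvI 1 x t) t := by
  have hexp : HasDerivAt (fun s : ℝ => exp (-I * s * x)) (exp (-I * t * x) * (-I * x)) t := by
    simpa using (((hasDerivAt_id t).ofReal_comp.const_mul (-I)).mul_const (x : ℂ)).cexp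
  have hh : HasDerivAt h (deriv h t) t := (hC1.differentiable one_ne_zero t).hasDerivAt
  refine ((hexp.mul (hh.sub_const (h 0))).div (hasDerivAt_id t).ofReal_comp
    (ofReal_ne_zero.2 ht)).congr_deriv ?_
  have htC : (t : ℂ) ≠ 0 := ofReal_ne_zero.2 ht
  simp only [pvI, Lam, if_neg ht, Pi.one_apply, Pi.mul_apply, id, ofReal_one]
  field_simp
  ring

lemma integral_pvI_Lam (hC1 : ContDiff ℝ 1 h) {a b : ℝ} (h0 : (0 : ℝ) ∉ uIcc a b) :
    ∫ t in a..b, pvI (Lam h) x t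
      = pvI (fun s => h s - h 0) x a - pvI (fun s => h s - h 0) x b
        - I * x * (∫ t in a..b, pvI h x t) + I * x * h 0 * ∫ t in a..b, pvI 1 x t := by
  have hne : ∀ t ∈ uIcc a b, t ≠ 0 := fun t ht => ne_of_mem_of_not_mem ht h0
  have hLam := intervalIntegrable_pvI x (fun t ht => continuousAt_Lam h hC1 (hne t ht)) h0
  have hh := intervalIntegrable_pvI x (fun t _ => hC1.continuous.continuousAt) h0
  have hone := intervalIntegrable_pvI x (f := 1) (fun t _ => continuousAt_const) h0
  have hftc := intervalIntegral.integral_eq_sub_of_hasDerivAt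
    (fun t ht => hasDerivAt_pvI_sub_const h x hC1 (hne t ht))
    ((hLam.neg.sub (hh.const_mul (I * x))).add (hone.const_mul (I * x * h 0)))
  rw [intervalIntegral.integral_add ?_ (hone.const_mul _),
    intervalIntegral.integral_sub ?_ (hh.const_mul _), intervalIntegral.integral_neg,
    intervalIntegral.integral_const_mul, intervalIntegral.integral_const_mul] at hftc
  · linear_combination -hftc
  · exact hLam.neg
  · exact hLam.neg.sub (hh.const_mul _)

lemma pvPartial_pvI_Lam (hC1 : ContDiff ℝ 1 h) {q : ℝ × ℝ} (hε : 0 < q.1) (hA : 0 < q.2) :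
    pvPartial (pvI (Lam h) x) q
      = (pvI (fun s => h s - h 0) x (-q.2) - pvI (fun s => h s - h 0) x (-q.1)
          + (pvI (fun s => h s - h 0) x q.1 - pvI (fun s => h s - h 0) x q.2))
        - I * x * pvPartial (pvI h x) q + I * x * h 0 * pvPartial (pvI 1 x) q := by
  rw [pvPartial, pvPartial, pvPartial, integral_pvI_Lam h x hC1 (notMem_uIcc_of_lt hε hA),
    integral_pvI_Lam h x hC1 (notMem_uIcc_of_gt (neg_lt_zero.2 hA) (neg_lt_zero.2 hε))]
  ring

lemma pvPartial_pvI_one {a b : ℝ} (ha : 0 < a) (hb : 0 < b) :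
    pvPartial (pvI 1 x) (a, b) = -2 * I * ((∫ t in a..b, Real.sin (t * x) / t : ℝ) : ℂ) := by
  have h0 : (0 : ℝ) ∉ uIcc a b := notMem_uIcc_of_lt ha hb
  have hint : IntervalIntegrable (pvI 1 x) volume a b :=
    intervalIntegrable_pvI x (fun t _ => continuousAt_const) h0
  have hint_neg : IntervalIntegrable (fun t => pvI 1 x (-t)) volume a b := by
    refine ContinuousOn.intervalIntegrable fun t ht => ?_
    have hne : -t ≠ 0 := neg_ne_zero.2 (ne_of_mem_of_not_mem ht h0)
    exact ((continuousAt_pvI x continuousAt_const hne).comp continuousAt_neg).continuousWithinAt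
  rw [pvPartial, ← intervalIntegral.integral_comp_neg,
    ← intervalIntegral.integral_add hint_neg hint, ← intervalIntegral.integral_ofReal,
    ← intervalIntegral.integral_const_mul]
  refine intervalIntegral.integral_congr fun t ht => ?_
  have htC : (t : ℂ) ≠ 0 := ofReal_ne_zero.2 (ne_of_mem_of_not_mem ht h0)
  simp only [pvI, Pi.one_apply, ofReal_neg, ofReal_div, ofReal_sin, ofReal_mul, sin]
  field_simp
  rw [I_sq]
  ring

lemma tendsto_pvPartial_pvI_one :
    Tendsto (pvPartial (pvI 1 x)) (𝓝[>] 0 ×ˢ atTop)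
      (𝓝 (-2 * I * ((π / 2 * Real.sign x : ℝ) : ℂ))) := by
  refine ((tendsto_integral_sin_mul_div_self x).ofReal.const_mul (-2 * I)).congr' ?_
  filter_upwards [prod_mem_prod self_mem_nhdsWithin (Ioi_mem_atTop 0)] with q hq
  exact (pvPartial_pvI_one x hq.1 hq.2).symm

theorem hasG_Lam (hC1 : ContDiff ℝ 1 h)
    (hdecay : Tendsto (fun t : ℝ => h t / (t : ℂ)) (cocompact ℝ) (𝓝 0)) {Gh : ℂ}
    (hGh : HasG h x Gh) :
    HasG (Lam h) x (I / 2 * h 0 * x * Real.sign x - I * x * Gh) := by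
  have hbdry := tendsto_boundary_terms
    (tendsto_pvI_cocompact x (tendsto_sub_const_div_cocompact (h 0) hdecay))
    (tendsto_pvI_nhdsNE x ((hC1.differentiable one_ne_zero 0).hasDerivAt.sub_const (h 0))
      (sub_self _))
  have hlim := ((hbdry.const_mul (I / (2 * π))).sub ((hasG_iff.1 hGh).const_mul (I * x))).add
    ((tendsto_pvPartial_pvI_one x).const_mul (I * x * h 0 * (I / (2 * π))))
  rw [hasG_iff]
  convert hlim.congr' ?_ using 2
  · push_cast
    field_simp
    linear_combination (h 0 * x * Real.sign x * π) * I_sq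
  filter_upwards [prod_mem_prod self_mem_nhdsWithin (Ioi_mem_atTop 0)] with q hq
  rw [pvPartial_pvI_Lam h x hC1 hq.1 hq.2]
  ring

end

/-- If `h ∈ C¹`, `h(t)/t → 0` as `|t| → ∞`, and `𝔊(h)(x)` exists, then `𝔊(Λh)(x)` exists and
`x·𝔊(h)(x) = (1/2)·h(0)·x·sign(x) + i·𝔊(Λh)(x)`. -/
theorem stmt0 (h : ℝ → ℂ) (x : ℝ) (Gh : ℂ)
    (hC1 : ContDiff ℝ 1 h)
    (hdecay : Tendsto (fun t : ℝ => h t / (t : ℂ)) (cocompact ℝ) (𝓝 0))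
    (hGh : HasG h x Gh) :
    ∃ GLh : ℂ, HasG (Lam h) x GLh ∧
      (x : ℂ) * Gh
        = (1 / 2 : ℂ) * h 0 * (x : ℂ) * ((Real.sign x : ℝ) : ℂ) + Complex.I * GLh :=
  ⟨_, hasG_Lam h x hC1 hdecay hGh, by
    linear_combination (x * Gh - 1 / 2 * h 0 * x * Real.sign x) * Complex.I_sq⟩
end

section
/- Let k be a positive integer and h : ℝ → ℂ be k times continuously differentiable. Then for all t ≠ 0, (Λᵏh)(t) = -k!·t^{-k}·(h(0) - Σ_{j=0}^{k} h^{(j)}(t)·(-t)^j/j!) = (-1)^k · ∫_0^1 [h^{(k)}(t) - h^{(k)}(αt)]·k·α^{k-1} dα, and (Λᵏh)(0) = 0. -/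
open MeasureTheory Filter Set
open scoped Real Topology

/-!
Write `T_n h t` for the degree-`n` Taylor polynomial of `h` centred at `t`, evaluated at `0`.
Its derivative in `t` telescopes to `h^{(n+1)}(t) (-t)^n / n!`. On functions `g` with `g 0 = 0`,
`Λ` acts by `(Λg)(t) = g(t)/t - g'(t)`, which maps `-k! t^{-k} (h(0) - T_k h t)` to the same
expression with `k + 1`; this gives the first formula by induction. The integral form comes from
the fundamental theorem of calculus for `α ↦ T_k h (α t)` on `[0, 1]`.
-/

open scoped Nat

/-- The degree-`n` Taylor polynomial of `h` centred at `t`, evaluated at `0`. -/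
noncomputable def taylorAtZero (n : ℕ) (h : ℝ → ℂ) (t : ℝ) : ℂ :=
  ∑ j ∈ Finset.range (n + 1), iteratedDeriv j h t * (-(t : ℂ)) ^ j / (j ! : ℂ)

theorem taylorAtZero_succ (n : ℕ) (h : ℝ → ℂ) (t : ℝ) :
    taylorAtZero (n + 1) h t =
      taylorAtZero n h t + iteratedDeriv (n + 1) h t * (-(t : ℂ)) ^ (n + 1) / ((n + 1)! : ℂ) :=
  Finset.sum_range_succ _ _

theorem taylorAtZero_apply_zero (n : ℕ) (h : ℝ → ℂ) : taylorAtZero n h 0 = h 0 := by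
  induction n with
  | zero => simp [taylorAtZero]
  | succ n ih => simp [taylorAtZero_succ, ih]

theorem hasDerivAt_iteratedDeriv {N : WithTop ℕ∞} {j : ℕ} {h : ℝ → ℂ} (hC : ContDiff ℝ N h)
    (hj : j < N) (t : ℝ) : HasDerivAt (iteratedDeriv j h) (iteratedDeriv (j + 1) h t) t := by
  rw [iteratedDeriv_succ]
  exact (hC.differentiable_iteratedDeriv j hj t).hasDerivAt

theorem hasDerivAt_taylorAtZero {n : ℕ} {h : ℝ → ℂ} (hC : ContDiff ℝ (n + 1) h) (t : ℝ) :
    HasDerivAt (taylorAtZero n h) (iteratedDeriv (n + 1) h t * (-(t : ℂ)) ^ n / (n ! : ℂ)) t := by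
  induction n with
  | zero =>
    have hT : taylorAtZero 0 h = h := by ext s; simp [taylorAtZero]
    simpa [hT] using hasDerivAt_iteratedDeriv (j := 0) hC (by norm_num) t
  | succ n ih =>
    have hT : taylorAtZero (n + 1) h = fun s ↦ taylorAtZero n h s +
        iteratedDeriv (n + 1) h s * (-(s : ℂ)) ^ (n + 1) / ((n + 1)! : ℂ) :=
      funext (taylorAtZero_succ n h)
    have hpow : HasDerivAt (fun s : ℝ ↦ (-(s : ℂ)) ^ (n + 1))
        (((n + 1 : ℕ) : ℂ) * (-(t : ℂ)) ^ n * (-1)) t := by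
      simpa using ((hasDerivAt_id (t : ℂ)).neg.pow (n + 1)).comp_ofReal
    have hterm := ((hasDerivAt_iteratedDeriv (j := n + 1) hC (by norm_cast; omega) t).fun_mul
      hpow).div_const ((n + 1)! : ℂ)
    rw [hT]
    refine ((ih (hC.of_le (by norm_cast; omega))).add hterm).congr_deriv ?_
    rw [Nat.factorial_succ]
    push_cast
    field_simp
    ring

theorem Lam_iterate_apply_zero {k : ℕ} (hk : 0 < k) (h : ℝ → ℂ) : Lam^[k] h 0 = 0 := by
  obtain ⟨m, rfl⟩ := Nat.exists_eq_add_one_of_ne_zero hk.ne'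
  simp [Function.iterate_succ_apply', Lam]

theorem Lam_apply_of_hasDerivAt {g F : ℝ → ℂ} {F' : ℂ} {t : ℝ} (ht : t ≠ 0) (hg0 : g 0 = 0)
    (hgF : g =ᶠ[𝓝 t] F) (hF : HasDerivAt F F' t) : Lam g t = F t / t - F' := by
  have htC : (t : ℂ) ≠ 0 := by exact_mod_cast ht
  rw [Lam, if_neg ht, hg0, hgF.deriv_eq, hF.deriv, hgF.eq_of_nhds]
  field_simp
  ring

theorem Lam_iterate_eq_taylor {m : ℕ} {h : ℝ → ℂ} (hC : ContDiff ℝ (m + 1) h) {t : ℝ}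
    (ht : t ≠ 0) :
    Lam^[m + 1] h t =
      -((m + 1)! : ℂ) * ((t : ℂ)⁻¹) ^ (m + 1) * (h 0 - taylorAtZero (m + 1) h t) := by
  have htC : (t : ℂ) ≠ 0 := by exact_mod_cast ht
  induction m generalizing t with
  | zero =>
    rw [Function.iterate_one, Lam, if_neg ht, taylorAtZero_succ, taylorAtZero,
      Finset.sum_range_one, iteratedDeriv_zero, iteratedDeriv_one]
    norm_num
    field_simp
  | succ m ih =>
    have hC' : ContDiff ℝ (m + 1) h := hC.of_le (by norm_cast; omega)
    have hgF : Lam^[m + 1] h =ᶠ[𝓝 t] fun s ↦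
        -((m + 1)! : ℂ) * ((s : ℂ)⁻¹) ^ (m + 1) * (h 0 - taylorAtZero (m + 1) h s) := by
      filter_upwards [isOpen_ne.mem_nhds ht] with s hs
      exact ih hC' hs (by exact_mod_cast hs)
    have hinv : HasDerivAt (fun s : ℝ ↦ ((s : ℂ)⁻¹) ^ (m + 1))
        (((m + 1 : ℕ) : ℂ) * ((t : ℂ)⁻¹) ^ m * (-1 / (t : ℂ) ^ 2)) t :=
      (((hasDerivAt_id (t : ℂ)).inv htC).pow (m + 1)).comp_ofReal
    have hF := (hinv.const_mul (-((m + 1)! : ℂ))).mul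
      ((hasDerivAt_taylorAtZero hC t).const_sub (h 0))
    rw [Function.iterate_succ_apply',
      Lam_apply_of_hasDerivAt ht (Lam_iterate_apply_zero m.succ_pos h) hgF hF,
      taylorAtZero_succ (m + 1), Nat.factorial_succ (m + 1)]
    have hfac : ((m + 1)! : ℂ) ≠ 0 := by exact_mod_cast (m + 1).factorial_ne_zero
    have hm : (m : ℂ) + 1 + 1 ≠ 0 := by exact_mod_cast (m + 1).succ_ne_zero
    simp only [inv_pow]
    push_cast
    field_simp
    ring

theorem sub_taylorAtZero_eq_integral {n : ℕ} {h : ℝ → ℂ} (hC : ContDiff ℝ (n + 1) h) (t : ℝ) :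
    h 0 - taylorAtZero n h t = (-(t : ℂ)) ^ (n + 1) / (n ! : ℂ) *
      ∫ α in (0 : ℝ)..1, iteratedDeriv (n + 1) h (α * t) * (α : ℂ) ^ n := by
  have hD : Continuous (iteratedDeriv (n + 1) h) := hC.continuous_iteratedDeriv (n + 1) le_rfl
  have hφ : ∀ α ∈ uIcc (0 : ℝ) 1, HasDerivAt (fun α : ℝ ↦ taylorAtZero n h (α * t))
      (-((-(t : ℂ)) ^ (n + 1) / (n ! : ℂ) * (iteratedDeriv (n + 1) h (α * t) * (α : ℂ) ^ n)))
      α := by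
    intro α _
    refine ((hasDerivAt_taylorAtZero hC (α * t)).scomp α
      ((hasDerivAt_id α).mul_const t)).congr_deriv ?_
    simp only [one_mul, Complex.real_smul]
    push_cast
    ring
  have hFTC := intervalIntegral.integral_eq_sub_of_hasDerivAt hφ
    (by apply Continuous.intervalIntegrable; fun_prop)
  rw [intervalIntegral.integral_neg, intervalIntegral.integral_const_mul] at hFTC
  simp only [one_mul, zero_mul, taylorAtZero_apply_zero] at hFTC
  linear_combination hFTC

theorem integral_sub_mul_succ_mul_pow (c : ℂ) {f : ℝ → ℂ} (n : ℕ)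
    (hf : IntervalIntegrable (fun α : ℝ ↦ f α * (α : ℂ) ^ n) volume 0 1) :
    ∫ α in (0 : ℝ)..1, (c - f α) * ((n + 1 : ℕ) : ℂ) * (α : ℂ) ^ n =
      c - (n + 1) * ∫ α in (0 : ℝ)..1, f α * (α : ℂ) ^ n := by
  have hpow : ∫ α in (0 : ℝ)..1, (α : ℂ) ^ n = 1 / (n + 1) := by
    simp_rw [← Complex.ofReal_pow, intervalIntegral.integral_ofReal, integral_pow]
    push_cast
    simp
  have hn : (n : ℂ) + 1 ≠ 0 := by exact_mod_cast n.succ_ne_zero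
  have hsplit : (fun α : ℝ ↦ (c - f α) * ((n + 1 : ℕ) : ℂ) * (α : ℂ) ^ n) =
      fun α : ℝ ↦ ((n + 1) * c) * (α : ℂ) ^ n - (n + 1) * (f α * (α : ℂ) ^ n) := by
    ext α
    push_cast
    ring
  have hmono : IntervalIntegrable (fun α : ℝ ↦ (α : ℂ) ^ n) volume 0 1 :=
    Continuous.intervalIntegrable (by fun_prop) _ _
  rw [hsplit, intervalIntegral.integral_sub (hmono.const_mul _) (hf.const_mul _),
    intervalIntegral.integral_const_mul, intervalIntegral.integral_const_mul, hpow]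
  field_simp

theorem Lam_iterate_eq_integral {m : ℕ} {h : ℝ → ℂ} (hC : ContDiff ℝ (m + 1) h) {t : ℝ}
    (ht : t ≠ 0) :
    Lam^[m + 1] h t = (-1 : ℂ) ^ (m + 1) * ∫ α in (0 : ℝ)..1,
      (iteratedDeriv (m + 1) h t - iteratedDeriv (m + 1) h (α * t)) * ((m + 1 : ℕ) : ℂ) *
        (α : ℂ) ^ m := by
  have hD : Continuous (iteratedDeriv (m + 1) h) := hC.continuous_iteratedDeriv (m + 1) le_rfl
  have htC : (t : ℂ) ≠ 0 := by exact_mod_cast ht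
  have hfac : (m ! : ℂ) ≠ 0 := by exact_mod_cast m.factorial_ne_zero
  rw [Lam_iterate_eq_taylor hC ht, taylorAtZero_succ, sub_add_eq_sub_sub,
    sub_taylorAtZero_eq_integral hC, integral_sub_mul_succ_mul_pow _ _
      (Continuous.intervalIntegrable (by fun_prop) _ _), Nat.factorial_succ]
  generalize ∫ α in (0 : ℝ)..1, iteratedDeriv (m + 1) h (α * t) * (α : ℂ) ^ m = J
  simp only [inv_pow, neg_pow (t : ℂ)]
  push_cast
  field_simp
  ring

/-- For `k ≥ 1` and `h` `k` times continuously differentiable, for `t ≠ 0`,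
`(Λᵏh)(t) = -k! t^{-k} (h(0) - ∑_{j=0}^k h^{(j)}(t)(-t)^j/j!)
          = (-1)^k ∫_0^1 [h^{(k)}(t) - h^{(k)}(αt)] k α^{k-1} dα`,
and `(Λᵏh)(0) = 0`. -/
theorem stmt1 (k : ℕ) (hk : 0 < k) (h : ℝ → ℂ) (hCk : ContDiff ℝ k h) :
    (∀ t : ℝ, t ≠ 0 →
      (Lam^[k] h t
          = -(Nat.factorial k : ℂ) * ((t : ℂ)⁻¹) ^ k *
              (h 0 - ∑ j ∈ Finset.range (k + 1),
                iteratedDeriv j h t * (-(t : ℂ)) ^ j / (Nat.factorial j : ℂ)) ∧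
       Lam^[k] h t
          = (-1 : ℂ) ^ k *
              ∫ α in (0:ℝ)..1,
                (iteratedDeriv k h t - iteratedDeriv k h (α * t)) * (k : ℂ) * (α : ℂ) ^ (k - 1)))
      ∧ Lam^[k] h 0 = 0 := by
  obtain ⟨m, rfl⟩ := Nat.exists_eq_add_one_of_ne_zero hk.ne'
  have hC : ContDiff ℝ (m + 1) h := by exact_mod_cast hCk
  exact ⟨fun t ht ↦ ⟨Lam_iterate_eq_taylor hC ht, Lam_iterate_eq_integral hC ht⟩,
    Lam_iterate_apply_zero hk h⟩
end

section
/- Let m be a positive integer and Y a random variable with E|Y|^m < ∞, and let N(t) := E e^{itY} be its characteristic function. Then there exist complex numbers c₁, c₂ with |c₁| + |c₂| ≤ E|Y|^m and characteristic functions φ₁, φ₂ of (some) random variables such that the m-th derivative of N satisfies N^{(m)} = c₁·φ₁ + c₂·φ₂. -/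
/-!
By Mathlib's `iteratedDeriv_charFun`, `N^{(m)}(t) = i^m ∫ x^m e^{itx} dν(x)` for the law `ν` of
`Y`. Splitting `x^m` into its positive and negative parts, each part `g` is a density with respect
to `ν`, and the finite measure `g • ν` has Fourier transform `(∫ g dν) · φ` with `φ` the
characteristic function of its normalisation. The two masses add up to `∫ |x|^m dν = E|Y|^m`.
-/

open MeasureTheory Filter Set
open scoped Real Topology

/-- `φ` is the characteristic function of some random variable (i.e., of some probability
distribution on `ℝ`). -/
def IsCharFun (φ : ℝ → ℂ) : Prop :=
  ∃ ν : Measure ℝ, IsProbabilityMeasure ν ∧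
    ∀ t : ℝ, φ t = ∫ x, Complex.exp (Complex.I * t * x) ∂ν

lemma memLp_of_integrable_abs_pow {α : Type*} [MeasurableSpace α] {μ : Measure α} {f : α → ℝ}
    (hf : AEStronglyMeasurable f μ) {p : ℕ} (h : Integrable (fun x => |f x| ^ p) μ) :
    MemLp f p μ := by
  rcases eq_or_ne p 0 with rfl | hp
  · simpa using hf
  · rw [← integrable_norm_rpow_iff hf (by simpa) (by simp)]
    simpa using h

lemma exists_isCharFun_integral_exp_eq_mul (ν : Measure ℝ) [IsFiniteMeasure ν] :
    ∃ φ : ℝ → ℂ, IsCharFun φ ∧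
      ∀ t : ℝ, ∫ x, Complex.exp (Complex.I * t * x) ∂ν = ν.real univ * φ t := by
  rcases eq_zero_or_neZero ν with rfl | _
  · exact ⟨_, ⟨Measure.dirac 0, inferInstance, fun t => rfl⟩, fun t => by simp⟩
  have hmass : (ν univ).toReal ≠ 0 := (ENNReal.toReal_pos (NeZero.ne _) (measure_ne_top _ _)).ne'
  refine ⟨_, ⟨(ν univ)⁻¹ • ν, inferInstance, fun t => rfl⟩, fun t => ?_⟩
  rw [integral_smul_measure, ENNReal.toReal_inv, Complex.real_smul, ← mul_assoc,
    ← Complex.ofReal_mul, Measure.real, mul_inv_cancel₀ hmass, Complex.ofReal_one, one_mul]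

lemma exists_isCharFun_integral_mul_exp_eq_mul {ν : Measure ℝ} {g : ℝ → ℝ}
    (hg : Integrable g ν) (hg₀ : 0 ≤ᵐ[ν] g) :
    ∃ φ : ℝ → ℂ, IsCharFun φ ∧ ∀ t : ℝ,
      ∫ x, (g x : ℂ) * Complex.exp (Complex.I * t * x) ∂ν = (∫ x, g x ∂ν : ℝ) * φ t := by
  set ρ := ν.withDensity fun x => ENNReal.ofReal (g x)
  have hρ : ρ univ = ENNReal.ofReal (∫ x, g x ∂ν) := by
    rw [withDensity_apply _ MeasurableSet.univ, setLIntegral_univ,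
      ofReal_integral_eq_lintegral_ofReal hg hg₀]
  have : IsFiniteMeasure ρ := ⟨by simp [hρ]⟩
  obtain ⟨φ, hφ, hρφ⟩ := exists_isCharFun_integral_exp_eq_mul ρ
  refine ⟨φ, hφ, fun t => ?_⟩
  rw [← ENNReal.toReal_ofReal (integral_nonneg_of_ae hg₀), ← hρ, ← Measure.real, ← hρφ,
    integral_withDensity_eq_integral_toReal_smul₀ hg.aemeasurable.ennreal_ofReal
      (ae_of_all _ fun _ => ENNReal.ofReal_lt_top)]
  refine integral_congr_ae ?_
  filter_upwards [hg₀] with x hx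
  rw [ENNReal.toReal_ofReal hx, Complex.real_smul]

lemma exists_isCharFun_combination_integral_mul_exp {ν : Measure ℝ} {g : ℝ → ℝ}
    (hg : Integrable g ν) :
    ∃ (c₁ c₂ : ℂ) (φ₁ φ₂ : ℝ → ℂ), ‖c₁‖ + ‖c₂‖ = ∫ x, |g x| ∂ν ∧
      IsCharFun φ₁ ∧ IsCharFun φ₂ ∧ ∀ t : ℝ,
        ∫ x, (g x : ℂ) * Complex.exp (Complex.I * t * x) ∂ν = c₁ * φ₁ t + c₂ * φ₂ t := by
  have hpos : Integrable (fun x => (g x)⁺) ν := hg.pos_part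
  have hneg : Integrable (fun x => (g x)⁻) ν := hg.neg_part
  obtain ⟨φ₁, hφ₁, h₁⟩ := exists_isCharFun_integral_mul_exp_eq_mul hpos
    (ae_of_all _ fun x => posPart_nonneg (g x))
  obtain ⟨φ₂, hφ₂, h₂⟩ := exists_isCharFun_integral_mul_exp_eq_mul hneg
    (ae_of_all _ fun x => negPart_nonneg (g x))
  refine ⟨(∫ x, (g x)⁺ ∂ν : ℝ), -(∫ x, (g x)⁻ ∂ν : ℝ), φ₁, φ₂, ?_, hφ₁, hφ₂, fun t => ?_⟩
  · rw [norm_neg, Complex.norm_real, Complex.norm_real, Real.norm_of_nonneg (integral_nonneg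
      fun x => posPart_nonneg (g x)), Real.norm_of_nonneg (integral_nonneg
      fun x => negPart_nonneg (g x)), ← integral_add hpos hneg]
    simp only [posPart_add_negPart]
  · have hexp : ∀ x : ℝ, ‖Complex.exp (Complex.I * t * x)‖ = 1 := fun x => by
      rw [Complex.norm_exp]; simp
    have hint : ∀ f : ℝ → ℝ, Integrable f ν →
        Integrable (fun x => (f x : ℂ) * Complex.exp (Complex.I * t * x)) ν := fun f hf =>
      hf.ofReal.mul_bdd (c := 1) (by fun_prop) (ae_of_all _ fun x => (hexp x).le)
    rw [neg_mul, ← h₁, ← h₂, ← sub_eq_add_neg, ← integral_sub (hint _ hpos) (hint _ hneg)]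
    simp only [← sub_mul, ← Complex.ofReal_sub, posPart_sub_negPart]

theorem stmt6_general (m : ℕ)
    (Ω : Type) (mΩ : MeasurableSpace Ω) (μ : Measure Ω) (hμ : IsProbabilityMeasure μ)
    (Y : Ω → ℝ) (hY : Measurable Y)
    (hmom : Integrable (fun ω => |Y ω| ^ m) μ)
    (N : ℝ → ℂ) (hN : ∀ t : ℝ, N t = ∫ ω, Complex.exp (Complex.I * t * Y ω) ∂μ) :
    ∃ (c₁ c₂ : ℂ) (φ₁ φ₂ : ℝ → ℂ),
      ‖c₁‖ + ‖c₂‖ ≤ (∫ ω, |Y ω| ^ m ∂μ) ∧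
      IsCharFun φ₁ ∧ IsCharFun φ₂ ∧
      ∀ t : ℝ, iteratedDeriv m N t = c₁ * φ₁ t + c₂ * φ₂ t := by
  set ν := μ.map Y
  have hN_eq : N = charFun ν := funext fun t => by
    rw [hN, charFun_apply_real, integral_map hY.aemeasurable (by fun_prop)]
    simp only [mul_comm, mul_left_comm]
  have hmomν : Integrable (fun x => |x| ^ m) ν :=
    (integrable_map_measure (by fun_prop) hY.aemeasurable).2 hmom
  have hpow : Integrable (fun x : ℝ => x ^ m) ν :=
    hmomν.mono' (by fun_prop) (ae_of_all _ fun x => by simp)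
  obtain ⟨c₁, c₂, φ₁, φ₂, hc, hφ₁, hφ₂, hsplit⟩ :=
    exists_isCharFun_combination_integral_mul_exp hpow
  refine ⟨Complex.I ^ m * c₁, Complex.I ^ m * c₂, φ₁, φ₂, ?_, hφ₁, hφ₂, fun t => ?_⟩
  · simp only [norm_mul, norm_pow, Complex.norm_I, one_pow, one_mul, hc, abs_pow]
    exact (integral_map hY.aemeasurable (by fun_prop)).le
  · rw [hN_eq, iteratedDeriv_charFun (memLp_of_integrable_abs_pow aestronglyMeasurable_id hmomν),
      mul_assoc, mul_assoc, ← mul_add, ← hsplit]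
    simp only [Complex.ofReal_pow, mul_comm, mul_left_comm]

/-- Proposition: if `E|Y|^m < ∞` and `N` is the characteristic function of `Y`, then `N^{(m)}`
is a linear combination `c₁ φ₁ + c₂ φ₂` of two characteristic functions with
`|c₁| + |c₂| ≤ E|Y|^m`. -/
theorem stmt6 (m : ℕ) (hm : 0 < m)
    (Ω : Type) (mΩ : MeasurableSpace Ω) (μ : Measure Ω) (hμ : IsProbabilityMeasure μ)
    (Y : Ω → ℝ) (hY : Measurable Y)
    (hmom : Integrable (fun ω => |Y ω| ^ m) μ)
    (N : ℝ → ℂ) (hN : ∀ t : ℝ, N t = ∫ ω, Complex.exp (Complex.I * t * Y ω) ∂μ) :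
    ∃ (c₁ c₂ : ℂ) (φ₁ φ₂ : ℝ → ℂ),
      ‖c₁‖ + ‖c₂‖ ≤ (∫ ω, |Y ω| ^ m ∂μ) ∧
      IsCharFun φ₁ ∧ IsCharFun φ₂ ∧
      ∀ t : ℝ, iteratedDeriv m N t = c₁ * φ₁ t + c₂ * φ₂ t :=
  stmt6_general m Ω mΩ μ hμ Y hY hmom N hN
end

section
/- Let p be a symmetric (even) probability density function on ℝ whose Fourier transform p̂ satisfies p̂(t) = 0 for |t| > 1. Let G : ℝ → ℝ be an odd, strictly increasing function of bounded variation such that 1/2 + G is a distribution function and whose Fourier–Stieltjes transform ∫ e^{itx} dG(x) vanishes for |t| > γ for some real γ > 0. Set κ_* := 1/(2·∫_0^∞ p(x)·G(x) dx). Then κ_* > 2, and for every real κ ≥ κ_*, the function F̃(y) := ∫_{-∞}^{y} p(x)·(1 - κ·G(x)) dx satisfies F̃(y) ≥ 1{y ≥ 0} for all real y, with F̃(-∞) = 0 and F̃(∞) = 1. -/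
open MeasureTheory Filter Set
open scoped Real Topology

/-- Tempered tilting: let `p` be a symmetric probability density whose Fourier transform vanishes
for `|t| > 1`; let `G` be an odd, strictly increasing function such that `1/2 + G` is a
distribution function (encoded by a probability measure `μG` with `G(x) = μG(Iic x) - 1/2`, which
entails that `G` is of bounded variation), whose Fourier--Stieltjes transform vanishes for
`|s| > γ`, `γ > 0`. Set `κ_* = 1/(2∫_0^∞ p G)`. Then `κ_* > 2` and, for every `κ ≥ κ_*`,
`F̃(y) = ∫_{-∞}^y p(x)(1 - κ G(x)) dx` satisfies `F̃(y) ≥ 1{y ≥ 0}` for all real `y`,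
`F̃(-∞) = 0` and `F̃(∞) = 1`. -/
theorem stmt13 (p : ℝ → ℝ) (hpmeas : Measurable p) (hppos : ∀ x : ℝ, 0 ≤ p x)
    (hpint : Integrable p (volume : Measure ℝ)) (hpone : (∫ x : ℝ, p x) = 1)
    (hpeven : ∀ x : ℝ, p (-x) = p x)
    (hphat0 : ∀ t : ℝ, 1 < |t| → (∫ x : ℝ, Complex.exp (Complex.I * t * x) * p x) = 0)
    (G : ℝ → ℝ) (hGodd : ∀ x : ℝ, G (-x) = -G x) (hGmono : StrictMono G)
    (μG : Measure ℝ) (hμG : IsProbabilityMeasure μG)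
    (hGdf : ∀ x : ℝ, G x = (μG (Set.Iic x)).toReal - 1 / 2)
    (γ : ℝ) (hγ : 0 < γ)
    (hGhat0 : ∀ s : ℝ, γ < |s| → (∫ x : ℝ, Complex.exp (Complex.I * s * x) ∂μG) = 0)
    (κstar : ℝ) (hκstar : κstar = 1 / (2 * ∫ x in Set.Ioi (0:ℝ), p x * G x)) :
    2 < κstar ∧
    ∀ κ : ℝ, κstar ≤ κ →
      (∀ y : ℝ, Set.indicator (Set.Ici (0:ℝ)) (fun _ => (1:ℝ)) y
          ≤ ∫ x in Set.Iic y, p x * (1 - κ * G x)) ∧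
      Tendsto (fun y : ℝ => ∫ x in Set.Iic y, p x * (1 - κ * G x)) atBot (𝓝 0) ∧
      Tendsto (fun y : ℝ => ∫ x in Set.Iic y, p x * (1 - κ * G x)) atTop (𝓝 1) := by
  have hGmeas : Measurable G := hGmono.monotone.measurable
  have hG0 : G 0 = 0 := by have := hGodd 0; simp only [neg_zero] at this; linarith
  -- bounds on G
  have htoReal_le : ∀ x : ℝ, (μG (Set.Iic x)).toReal ≤ 1 := by
    intro x
    have h1 : μG (Set.Iic x) ≤ 1 := prob_le_one
    have := ENNReal.toReal_mono (by simp) h1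
    simpa using this
  have hGle : ∀ x : ℝ, G x ≤ 1 / 2 := by
    intro x; rw [hGdf]; have := htoReal_le x; linarith
  have hGge : ∀ x : ℝ, -(1 / 2) ≤ G x := by
    intro x; rw [hGdf]; have := ENNReal.toReal_nonneg (a := μG (Set.Iic x)); linarith
  have hGlt : ∀ x : ℝ, G x < 1 / 2 := by
    intro x
    have h1 : G x < G (x + 1) := hGmono (by linarith)
    have := hGle (x + 1); linarith
  have hGabs : ∀ x : ℝ, |G x| ≤ 1 / 2 := fun x => abs_le.2 ⟨hGge x, hGle x⟩
  -- integrability of p * G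
  have hpGint : Integrable (fun x => p x * G x) (volume : Measure ℝ) := by
    refine hpint.mono' ((hpmeas.mul hGmeas).aestronglyMeasurable) ?_
    filter_upwards with x
    have h1 : |p x * G x| = p x * |G x| := by
      rw [abs_mul, abs_of_nonneg (hppos x)]
    rw [Real.norm_eq_abs, h1]
    nlinarith [hGabs x, hppos x, abs_nonneg (G x)]
  -- symmetry : ∫_{Iic 0} p = ∫_{Ioi 0} p
  have hIic0 : (∫ x in Set.Iic (0:ℝ), p x) = ∫ x in Set.Ioi (0:ℝ), p x := by
    have h := integral_comp_neg_Iic (0:ℝ) p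
    simp only [hpeven, neg_zero] at h
    exact h
  have hhalf : (∫ x in Set.Ioi (0:ℝ), p x) = 1 / 2 := by
    have h := intervalIntegral.integral_Iic_add_Ioi (b := (0:ℝ)) (μ := volume)
      hpint.integrableOn hpint.integrableOn
    rw [hpone, hIic0] at h
    linarith
  -- odd total integral: ∫ p G = 0
  have hpGzero : (∫ x : ℝ, p x * G x) = 0 := by
    have h := integral_neg_eq_self (fun x => p x * G x) (volume : Measure ℝ)
    simp only [hpeven, hGodd, mul_neg] at h
    rw [integral_neg] at h
    linarith
  -- the support of p in (0,∞) has positive measure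
  have hSupp : 0 < volume (Function.support p ∩ Set.Ioi (0:ℝ)) := by
    rw [← setIntegral_pos_iff_support_of_nonneg_ae
      (Filter.Eventually.of_forall fun x => hppos x) hpint.integrableOn]
    rw [hhalf]; norm_num
  set I : ℝ := ∫ x in Set.Ioi (0:ℝ), p x * G x with hI
  -- I > 0
  have hIpos : 0 < I := by
    rw [hI, setIntegral_pos_iff_support_of_nonneg_ae ?_ hpGint.integrableOn]
    · refine lt_of_lt_of_le hSupp (measure_mono ?_)
      rintro x ⟨hpx, hx⟩
      have hGx : 0 < G x := by rw [← hG0]; exact hGmono hx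
      exact ⟨mul_ne_zero hpx (ne_of_gt hGx), hx⟩
    · show ∀ᵐ x ∂(volume.restrict (Set.Ioi (0:ℝ))), (0:ℝ) ≤ p x * G x
      rw [ae_restrict_iff' measurableSet_Ioi]
      filter_upwards with x hx
      have hGx : 0 < G x := by rw [← hG0]; exact hGmono hx
      exact mul_nonneg (hppos x) hGx.le
  -- I < 1/4
  have hIlt : I < 1 / 4 := by
    have hq : Integrable (fun x => p x * (1 / 2 - G x)) (volume : Measure ℝ) := by
      have : (fun x => p x * (1 / 2 - G x))
          = fun x => p x * (1 / 2) - p x * G x := by funext x; ring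
      rw [this]
      exact (hpint.mul_const _).sub hpGint
    have hqpos : 0 < ∫ x in Set.Ioi (0:ℝ), p x * (1 / 2 - G x) := by
      rw [setIntegral_pos_iff_support_of_nonneg_ae ?_ hq.integrableOn]
      · refine lt_of_lt_of_le hSupp (measure_mono ?_)
        rintro x ⟨hpx, hx⟩
        have := hGlt x
        exact ⟨mul_ne_zero hpx (ne_of_gt (by linarith [hGlt x] : (0:ℝ) < 1/2 - G x)), hx⟩
      · filter_upwards with x
        exact mul_nonneg (hppos x) (by linarith [hGlt x])
    have hsplit : (∫ x in Set.Ioi (0:ℝ), p x * (1 / 2 - G x))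
        = (∫ x in Set.Ioi (0:ℝ), p x) * (1 / 2) - I := by
      have h1 : (fun x => p x * (1 / 2 - G x))
          = fun x => p x * (1 / 2) - p x * G x := by funext x; ring
      rw [h1, integral_sub ((hpint.mul_const _).integrableOn) hpGint.integrableOn,
        integral_mul_const]
    rw [hsplit, hhalf] at hqpos
    linarith
  have hκ2 : 2 < κstar := by
    rw [hκstar, lt_div_iff₀ (by positivity)]
    nlinarith
  refine ⟨hκ2, fun κ hκ => ?_⟩
  have hκpos : 0 < κ := by linarith
  set f : ℝ → ℝ := fun x => p x * (1 - κ * G x) with hf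
  have hfint : Integrable f (volume : Measure ℝ) := by
    have h1 : f = fun x => p x - κ * (p x * G x) := by funext x; rw [hf]; ring
    rw [h1]
    exact hpint.sub (hpGint.const_mul κ)
  -- total integral is 1
  have hT : (∫ x : ℝ, f x) = 1 := by
    have h1 : f = fun x => p x - κ * (p x * G x) := by funext x; rw [hf]; ring
    rw [h1, integral_sub hpint (hpGint.const_mul κ), integral_const_mul, hpGzero, hpone]
    ring
  -- ∫_{Ioi 0} f ≤ 0
  have hIoi0f : (∫ x in Set.Ioi (0:ℝ), f x) ≤ 0 := by
    have h1 : f = fun x => p x - κ * (p x * G x) := by funext x; rw [hf]; ring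
    have h2 : (∫ x in Set.Ioi (0:ℝ), f x)
        = (∫ x in Set.Ioi (0:ℝ), p x) - κ * I := by
      rw [h1, integral_sub hpint.integrableOn ((hpGint.const_mul κ).integrableOn),
        integral_const_mul]
    have h3 : κstar * I ≤ κ * I := mul_le_mul_of_nonneg_right hκ hIpos.le
    have h4 : κstar * I = 1 / 2 := by
      rw [hκstar]; field_simp
    rw [h2, hhalf]
    linarith
  constructor
  · -- pointwise inequality
    intro y
    by_cases hy : 0 ≤ y
    · rw [Set.indicator_of_mem (Set.mem_Ici.2 hy)]
      have hsplit := intervalIntegral.integral_Iic_add_Ioi (b := y) (μ := volume)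
        hfint.integrableOn hfint.integrableOn
      rw [hT] at hsplit
      have hIoiy : (∫ x in Set.Ioi y, f x) ≤ 0 := by
        by_cases hc : 1 ≤ κ * G y
        · refine setIntegral_nonpos measurableSet_Ioi fun x hx => ?_
          have hGx : G y < G x := hGmono hx
          have : 1 ≤ κ * G x := by nlinarith
          have : 1 - κ * G x ≤ 0 := by linarith
          exact mul_nonpos_iff.2 (Or.inl ⟨hppos x, this⟩)
        · push_neg at hc
          have hsplit2 : (∫ x in Set.Ioc 0 y, f x) + (∫ x in Set.Ioi y, f x)
              = ∫ x in Set.Ioi (0:ℝ), f x := by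
            rw [← setIntegral_union (Set.Ioc_disjoint_Ioi le_rfl) measurableSet_Ioi
              hfint.integrableOn hfint.integrableOn, Set.Ioc_union_Ioi_eq_Ioi hy]
          have h1 : 0 ≤ ∫ x in Set.Ioc 0 y, f x := by
            refine setIntegral_nonneg measurableSet_Ioc fun x hx => ?_
            have hGx : G x ≤ G y := hGmono.monotone hx.2
            have : κ * G x < 1 := by nlinarith
            exact mul_nonneg (hppos x) (by linarith)
          linarith
      linarith
    · push_neg at hy
      rw [Set.indicator_of_notMem (by simpa using not_le.2 hy)]
      refine setIntegral_nonneg measurableSet_Iic fun x hx => ?_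
      have hGx : G x ≤ G y := hGmono.monotone hx
      have hGy : G y < 0 := by rw [← hG0]; exact hGmono hy
      have : κ * G x < 0 := by nlinarith
      exact mul_nonneg (hppos x) (by linarith)
  constructor
  · -- limit at -∞
    have hanti : Antitone (fun y : ℝ => Set.Iic (-y)) := fun a b hab =>
      Set.Iic_subset_Iic.2 (by linarith)
    have h := tendsto_setIntegral_of_antitone (f := f) (μ := volume)
      (fun y : ℝ => measurableSet_Iic) hanti ⟨0, hfint.integrableOn⟩
    have hE : (⋂ i : ℝ, Set.Iic (-i)) = (∅ : Set ℝ) := by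
      ext x
      simp only [Set.mem_iInter, Set.mem_Iic, Set.mem_empty_iff_false, iff_false, not_forall,
        not_le]
      exact ⟨1 - x, by linarith⟩
    rw [hE] at h
    simp only [Measure.restrict_empty, integral_zero_measure] at h
    exact (h.comp tendsto_neg_atBot_atTop).congr fun y => by
      simp [Function.comp]
  · -- limit at +∞
    have hmono : Monotone (fun y : ℝ => Set.Iic y) := fun a b hab =>
      Set.Iic_subset_Iic.2 hab
    have hU : (⋃ y : ℝ, Set.Iic y) = Set.univ := Set.iUnion_Iic
    have h := tendsto_setIntegral_of_monotone (f := f) (μ := volume)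
      (fun y : ℝ => measurableSet_Iic) hmono (by rw [hU]; exact hfint.integrableOn)
    rw [hU] at h
    simpa [hT] using h
end

section
/- Let p = 8/100 and let ξ be a Bernoulli random variable with P(ξ = 1) = p = 1 - P(ξ = 0); set X₁ := ξ - p, B := √(p(1-p)), and let Z be a standard normal random variable. Then there exists a real z ≥ 0 such that |P(X₁ > B·z) - P(Z > z)| > 1.0135 · E|X₁|³ / ((1 + z³)·B³). Consequently, every constant c_ν for which the nonuniform Berry–Esseen bound |P(S > Bz) - P(Z > z)| ≤ c_ν·(Σᵢ E|Xᵢ|³/B³)/(1 + z³) holds for all finite sequences of independent zero-mean random variables X₁,…,Xₙ (with S := ΣᵢXᵢ, B := √(Σᵢ E Xᵢ²) > 0) and all z ≥ 0 must satisfy c_ν > 1.0135. -/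
open MeasureTheory Filter Set ProbabilityTheory
open scoped Real Topology

/-! A single centred Bernoulli variable `X₁ = ξ - p` with `p = 0.08` takes the value `1 - p` with
probability `p`. For `z` just below `(1 - p)/B = √(23/2)` the event `X₁ > Bz` therefore still has
probability `p`, while `P(Z > z) < 3.5·10⁻⁴` by the truncated asymptotic expansion of Mills'
ratio; the difference beats `1.0135 E|X₁|³ / ((1 + z³) B³)`. Applying an assumed nonuniform
Berry–Esseen bound to the one-term sequence `X₁` then forces `c > 1.0135`. -/

open unitInterval

section Bernoulli

variable (p : I)

lemma integral_sub_bernoulliMeasure : ∫ x, (x - p) ∂Ber((1 : ℝ), 0, p) = 0 := by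
  rw [integral_bernoulliMeasure]; simp only [smul_eq_mul]; ring

lemma integral_sub_sq_bernoulliMeasure :
    ∫ x, (x - p) ^ 2 ∂Ber((1 : ℝ), 0, p) = p * (1 - p) := by
  rw [integral_bernoulliMeasure]; simp only [smul_eq_mul]; ring

lemma integral_abs_sub_pow_three_bernoulliMeasure :
    ∫ x, |x - p| ^ 3 ∂Ber((1 : ℝ), 0, p) = p * (1 - p) * (p ^ 2 + (1 - p) ^ 2) := by
  rw [integral_bernoulliMeasure, abs_of_nonneg (sub_nonneg.2 p.2.2),
    abs_of_nonpos (by simpa using p.2.1)]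
  simp only [smul_eq_mul]; ring

lemma bernoulliMeasure_real_lt_sub {t : ℝ} (ht₀ : 0 ≤ t) (ht₁ : t < 1 - p) :
    Ber((1 : ℝ), 0, p).real {x | t < x - p} = p :=
  bernoulliMeasure_real_apply_of_mem_of_notMem p (measurableSet_lt measurable_const (by fun_prop))
    ht₁ (by simp only [mem_ofPred_eq, not_lt]; linarith [p.2.1])

lemma map_eq_bernoulliMeasure {Ω : Type*} [MeasurableSpace Ω] {μ : Measure Ω}
    [IsProbabilityMeasure μ] {ξ : Ω → ℝ} (hξ : Measurable ξ)
    (h₁ : μ {ω | ξ ω = 1} = ENNReal.ofReal p) (h₀ : μ {ω | ξ ω = 0} = ENNReal.ofReal (1 - p)) :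
    μ.map ξ = Ber(1, 0, p) := by
  have hae : ∀ᵐ ω ∂μ, ξ ω = 1 ∨ ξ ω = 0 := by
    have hm₁ : MeasurableSet {ω | ξ ω = 1} := measurableSet_eq_fun hξ measurable_const
    have hm₀ : MeasurableSet {ω | ξ ω = 0} := measurableSet_eq_fun hξ measurable_const
    have hdisj : Disjoint {ω | ξ ω = 1} {ω | ξ ω = 0} :=
      disjoint_left.2 fun ω h1 h0 ↦ one_ne_zero (h1.symm.trans h0)
    refine (ae_mem_iff_measure_eq (hm₁.union hm₀).nullMeasurableSet).2 ?_
    rw [measure_union hdisj hm₀, h₁, h₀,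
      ← ENNReal.ofReal_add p.2.1 (sub_nonneg.2 p.2.2), measure_univ]
    simp
  rw [(Measure.ae_eq_or_eq_iff_map_eq_dirac_add_dirac hξ.aemeasurable one_ne_zero).1 hae,
    bernoulliMeasure_def]
  change μ {ω | ξ ω = 1} • _ + μ {ω | ξ ω = 0} • _ = _
  rw [h₁, h₀, ENNReal.smul_def, ENNReal.smul_def]
  congr 3
  · rw [← ENNReal.ofReal_coe_nnreal, coe_toNNReal]
  · rw [← ENNReal.ofReal_coe_nnreal, coe_toNNReal, coe_symm_eq]

end Bernoulli

noncomputable def gaussianTailApprox (x : ℝ) : ℝ :=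
  x⁻¹ - x⁻¹ ^ 3 + 3 * x⁻¹ ^ 5 - 15 * x⁻¹ ^ 7 + 105 * x⁻¹ ^ 9

lemma hasDerivAt_neg_exp_mul_gaussianTailApprox {x : ℝ} (hx : x ≠ 0) :
    HasDerivAt (fun t ↦ -(Real.exp (-(t ^ 2 / 2)) * gaussianTailApprox t))
      (Real.exp (-(x ^ 2 / 2)) * (1 + 945 * x⁻¹ ^ 10)) x := by
  have hexp : HasDerivAt (fun t : ℝ ↦ Real.exp (-(t ^ 2 / 2)))
      (Real.exp (-(x ^ 2 / 2)) * -x) x := by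
    have hsq : HasDerivAt (fun t : ℝ ↦ -(t ^ 2 / 2)) (-x) x :=
      (((hasDerivAt_pow 2 x).div_const 2).neg).congr_deriv (by ring)
    exact hsq.exp
  have hinv := hasDerivAt_inv hx
  have happrox : HasDerivAt gaussianTailApprox _ x :=
    (((hinv.sub (hinv.pow 3)).add ((hinv.pow 5).const_mul 3)).sub
      ((hinv.pow 7).const_mul 15)).add ((hinv.pow 9).const_mul 105)
  refine (hexp.mul happrox).neg.congr_deriv ?_
  simp only [gaussianTailApprox, inv_pow]
  field_simp
  ring

lemma tendsto_exp_mul_gaussianTailApprox :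
    Tendsto (fun t ↦ Real.exp (-(t ^ 2 / 2)) * gaussianTailApprox t) atTop (𝓝 0) := by
  have hexp : Tendsto (fun t : ℝ ↦ Real.exp (-(t ^ 2 / 2))) atTop (𝓝 0) :=
    Real.tendsto_exp_atBot.comp <| tendsto_neg_atTop_atBot.comp <|
      (tendsto_pow_atTop two_ne_zero).atTop_div_const two_pos
  have happrox : Tendsto gaussianTailApprox atTop (𝓝 0) := by
    have hpoly : Tendsto (fun u : ℝ ↦ u - u ^ 3 + 3 * u ^ 5 - 15 * u ^ 7 + 105 * u ^ 9)
        (𝓝 0) (𝓝 0) := by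
      have hcont : Continuous fun u : ℝ ↦ u - u ^ 3 + 3 * u ^ 5 - 15 * u ^ 7 + 105 * u ^ 9 := by
        fun_prop
      simpa using hcont.tendsto 0
    exact hpoly.comp tendsto_inv_atTop_zero
  simpa using hexp.mul happrox

/-- Truncation after an odd number of terms of the asymptotic expansion of Mills' ratio gives
an upper bound: the derivative of `-exp(-t²/2) * gaussianTailApprox t` dominates `exp(-t²/2)`. -/
lemma gaussianReal_Ioi_le {z : ℝ} (hz : 0 < z) :
    (gaussianReal 0 1 (Ioi z)).toReal
      ≤ Real.exp (-(z ^ 2 / 2)) * gaussianTailApprox z / √(2 * π) := by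
  set F := fun t ↦ -(Real.exp (-(t ^ 2 / 2)) * gaussianTailApprox t)
  set F' := fun x ↦ Real.exp (-(x ^ 2 / 2)) * (1 + 945 * x⁻¹ ^ 10)
  have hderiv : ∀ x ∈ Ici z, HasDerivAt F (F' x) x := fun x hx ↦
    hasDerivAt_neg_exp_mul_gaussianTailApprox (hz.trans_le hx).ne'
  have hF'_nonneg : ∀ x ∈ Ioi z, 0 ≤ F' x := fun x _ ↦ by positivity
  have hlim : Tendsto F atTop (𝓝 0) := by
    simpa [F] using tendsto_exp_mul_gaussianTailApprox.neg
  have hint := integrableOn_Ioi_deriv_of_nonneg' hderiv hF'_nonneg hlim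
  rw [gaussianReal_apply_eq_integral 0 one_ne_zero,
    ENNReal.toReal_ofReal (integral_nonneg fun x ↦ gaussianPDFReal_nonneg 0 1 x)]
  calc ∫ x in Ioi z, gaussianPDFReal 0 1 x
      ≤ ∫ x in Ioi z, F' x / √(2 * π) := by
        refine setIntegral_mono_on (integrable_gaussianPDFReal 0 1).integrableOn
          (hint.div_const _) measurableSet_Ioi fun x hx ↦ ?_
        have hle : Real.exp (-(x ^ 2 / 2)) ≤ F' x :=
          le_mul_of_one_le_right (Real.exp_nonneg _) (le_add_of_nonneg_right (by positivity))
        simpa [gaussianPDFReal, div_eq_inv_mul, neg_div] using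
          mul_le_mul_of_nonneg_left hle (by positivity : (0 : ℝ) ≤ (√(2 * π))⁻¹)
    _ = Real.exp (-(z ^ 2 / 2)) * gaussianTailApprox z / √(2 * π) := by
        rw [integral_div, integral_Ioi_of_hasDerivAt_of_nonneg' hderiv hF'_nonneg hlim]
        simp [F]

lemma exp_neg_le_numeric : Real.exp (-((33911649 / 10000000 : ℝ) ^ 2 / 2)) ≤ 0.0031827895 := by
  set a : ℝ := (33911649 / 10000000 : ℝ) ^ 2 / 16
  have hTaylor : (2.0518666 : ℝ) ≤ Real.exp a := by
    refine le_trans ?_ (Real.sum_le_exp_of_nonneg (by positivity) 12)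
    simp only [Finset.sum_range_succ, Finset.sum_range_zero, a]
    norm_num [Nat.factorial]
  have hpow : Real.exp (-((33911649 / 10000000 : ℝ) ^ 2 / 2)) = (Real.exp a)⁻¹ ^ 8 := by
    rw [← Real.exp_neg, ← Real.exp_nat_mul]
    norm_num [a]
  calc Real.exp (-((33911649 / 10000000 : ℝ) ^ 2 / 2)) = (Real.exp a)⁻¹ ^ 8 := hpow
    _ ≤ (2.0518666 : ℝ)⁻¹ ^ 8 := by gcongr
    _ ≤ 0.0031827895 := by norm_num

lemma le_sqrt_two_pi : (2.506628 : ℝ) ≤ √(2 * π) :=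
  Real.le_sqrt_of_sq_le (by nlinarith [Real.pi_gt_d6])

lemma gaussianReal_Ioi_le_numeric :
    (gaussianReal 0 1 (Ioi (33911649 / 10000000 : ℝ))).toReal ≤ 0.00034892 := by
  have happrox : 0 ≤ gaussianTailApprox (33911649 / 10000000 : ℝ) := by
    norm_num [gaussianTailApprox]
  calc (gaussianReal 0 1 (Ioi (33911649 / 10000000 : ℝ))).toReal
      ≤ Real.exp (-((33911649 / 10000000 : ℝ) ^ 2 / 2))
          * gaussianTailApprox (33911649 / 10000000) / √(2 * π) :=
        gaussianReal_Ioi_le (by norm_num)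
    _ ≤ 0.0031827895 * gaussianTailApprox (33911649 / 10000000) / 2.506628 := by
        gcongr
        · exact exp_neg_le_numeric
        · exact le_sqrt_two_pi
    _ ≤ 0.00034892 := by norm_num [gaussianTailApprox]

lemma sqrt_mul_lt_numeric :
    √(8 / 100 * (1 - 8 / 100)) * (33911649 / 10000000) < (1 - 8 / 100 : ℝ) := by
  rw [← lt_div_iff₀ (by norm_num), Real.sqrt_lt' (by norm_num)]
  norm_num

lemma lyapunov_lt_numeric :
    1.0135 * (8 / 100 * (1 - 8 / 100) * ((8 / 100) ^ 2 + (1 - 8 / 100) ^ 2))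
        / ((1 + (33911649 / 10000000) ^ 3) * √(8 / 100 * (1 - 8 / 100)) ^ 3)
      < (8 / 100 - 0.00034892 : ℝ) := by
  have hb : 0.2712931 < √(8 / 100 * (1 - 8 / 100) : ℝ) := Real.lt_sqrt_of_sq_lt (by norm_num)
  have hb3 : √(8 / 100 * (1 - 8 / 100) : ℝ) ^ 3
      = 8 / 100 * (1 - 8 / 100) * √(8 / 100 * (1 - 8 / 100)) := by
    rw [pow_succ, Real.sq_sqrt (by norm_num)]
  rw [hb3, div_lt_iff₀ (by positivity)]
  nlinarith

noncomputable def eightPercent : I := ⟨8 / 100, by norm_num, by norm_num⟩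

lemma coe_eightPercent : (eightPercent : ℝ) = 8 / 100 := rfl

lemma exists_tail_gap_bernoulliMeasure : ∃ z : ℝ, 0 ≤ z ∧
    1.0135 * (∫ x, |x - 8 / 100| ^ 3 ∂Ber((1 : ℝ), 0, eightPercent))
        / ((1 + z ^ 3) * √(8 / 100 * (1 - 8 / 100)) ^ 3)
      < |Ber((1 : ℝ), 0, eightPercent).real {x | √(8 / 100 * (1 - 8 / 100)) * z < x - 8 / 100}
          - (gaussianReal 0 1 (Ioi z)).toReal| := by
  refine ⟨33911649 / 10000000, by norm_num, ?_⟩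
  have hmoment := integral_abs_sub_pow_three_bernoulliMeasure eightPercent
  have hprob := bernoulliMeasure_real_lt_sub eightPercent (by positivity) sqrt_mul_lt_numeric
  simp only [coe_eightPercent] at hmoment hprob
  rw [hmoment, hprob]
  have htail := gaussianReal_Ioi_le_numeric
  rw [abs_of_pos (by linarith)]
  linarith [lyapunov_lt_numeric]

lemma lt_of_mul_div_lt_of_le_mul_div {k c a b e y : ℝ} (ha : 0 < a) (hb : 0 < b) (he : 0 < e)
    (hlower : k * a / (e * b) < y) (hupper : y ≤ c * (a / b) / e) : k < c := by
  have hscale : 0 < a / (e * b) := by positivity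
  refine lt_of_mul_lt_mul_right ?_ hscale.le
  calc k * (a / (e * b)) = k * a / (e * b) := by rw [mul_div_assoc]
    _ < y := hlower
    _ ≤ c * (a / b) / e := hupper
    _ = c * (a / (e * b)) := by rw [mul_div_assoc, div_div, mul_comm b]

/-- Lower bound on the nonuniform Berry--Esseen constant. First part: for `p = 8/100`, a
Bernoulli(`p`) variable `ξ`, `X₁ = ξ - p` and `B = √(p(1-p))`, there is a real `z ≥ 0` with
`|P(X₁ > Bz) - P(Z > z)| > 1.0135 E|X₁|³/((1+z³) B³)`. Second part: consequently, any constant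
`c` for which the nonuniform Berry--Esseen bound
`|P(S > Bz) - P(Z > z)| ≤ c (∑ᵢ E|Xᵢ|³/B³)/(1+z³)` holds for all finite sequences of independent
zero-mean random variables (with `B = √(∑ᵢ E Xᵢ²) > 0`) and all `z ≥ 0` satisfies
`c > 1.0135`. -/
theorem stmt19 :
    (∀ (Ω : Type) (mΩ : MeasurableSpace Ω) (μ : Measure Ω), IsProbabilityMeasure μ →
      ∀ ξ : Ω → ℝ, Measurable ξ →
      μ {ω | ξ ω = 1} = ENNReal.ofReal (8 / 100) →
      μ {ω | ξ ω = 0} = ENNReal.ofReal (1 - 8 / 100) →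
      ∃ z : ℝ, 0 ≤ z ∧
        1.0135 * (∫ ω, |ξ ω - 8 / 100| ^ 3 ∂μ)
            / ((1 + z ^ 3) * Real.sqrt ((8 / 100) * (1 - 8 / 100)) ^ 3)
          < |(μ {ω | Real.sqrt ((8 / 100) * (1 - 8 / 100)) * z < ξ ω - 8 / 100}).toReal
              - (gaussianReal 0 1 (Set.Ioi z)).toReal|) ∧
    (∀ c : ℝ,
      (∀ (Ω : Type) (mΩ : MeasurableSpace Ω) (μ : Measure Ω), IsProbabilityMeasure μ →
        ∀ (n : ℕ) (X : Fin n → Ω → ℝ),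
        (∀ i, Measurable (X i)) →
        iIndepFun X μ →
        (∀ i, Integrable (X i) μ) →
        (∀ i, ∫ ω, X i ω ∂μ = 0) →
        (∀ i, Integrable (fun ω => (X i ω) ^ 2) μ) →
        (∀ i, Integrable (fun ω => |X i ω| ^ 3) μ) →
        0 < Real.sqrt (∑ i, ∫ ω, (X i ω) ^ 2 ∂μ) →
        ∀ z : ℝ, 0 ≤ z →
          |(μ {ω | Real.sqrt (∑ i, ∫ ω', (X i ω') ^ 2 ∂μ) * z < ∑ i, X i ω}).toReal
              - (gaussianReal 0 1 (Set.Ioi z)).toReal|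
            ≤ c * ((∑ i, ∫ ω, |X i ω| ^ 3 ∂μ)
                    / Real.sqrt (∑ i, ∫ ω, (X i ω) ^ 2 ∂μ) ^ 3)
                / (1 + z ^ 3)) →
      1.0135 < c) := by
  obtain ⟨z, hz, hgap⟩ := exists_tail_gap_bernoulliMeasure
  refine ⟨fun Ω _ μ _ ξ hξ h₁ h₀ ↦ ⟨z, hz, ?_⟩, fun c hc ↦ ?_⟩
  · rw [← map_eq_bernoulliMeasure eightPercent hξ h₁ h₀, integral_map hξ.aemeasurable
      (by fun_prop), map_measureReal_apply hξ (measurableSet_lt measurable_const (by fun_prop))]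
      at hgap
    exact hgap
  · have hvar : ∫ x, (x - 8 / 100) ^ 2 ∂Ber((1 : ℝ), 0, eightPercent) = 8 / 100 * (1 - 8 / 100) :=
      integral_sub_sq_bernoulliMeasure eightPercent
    have hBE := hc ℝ _ Ber((1 : ℝ), 0, eightPercent) inferInstance 1 (fun _ x ↦ x - 8 / 100)
      (fun _ ↦ by fun_prop) iIndepFun.of_subsingleton
      (fun _ ↦ integrable_bernoulliMeasure _ _ _ _)
      (fun _ ↦ integral_sub_bernoulliMeasure eightPercent)
      (fun _ ↦ integrable_bernoulliMeasure _ _ _ _) (fun _ ↦ integrable_bernoulliMeasure _ _ _ _)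
      (by simp only [Fin.sum_univ_one, hvar]; positivity) z hz
    simp only [Fin.sum_univ_one, hvar] at hBE
    have hmoment : 0 < ∫ x, |x - 8 / 100| ^ 3 ∂Ber((1 : ℝ), 0, eightPercent) := by
      rw [← coe_eightPercent, integral_abs_sub_pow_three_bernoulliMeasure, coe_eightPercent]
      norm_num
    exact lt_of_mul_div_lt_of_le_mul_div hmoment (by positivity) (by positivity) hgap hBE
end
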